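/- Let r, d, n ∈ ℕ with πd < r + 2. Then for every α ∈ ℕ^n_d, the product Jackson coefficient λ_α^r := ∏_{i=1}^n λ_{α_i}^r satisfies 1 − π²d²/(r+2)² ≤ λ_α^r ≤ 1; in particular |1 − λ_α^r| ≤ π²d²/(r+2)². -/

import Mathlib

/-- The univariate Jackson coefficients: `λ^r_0 = 1` and, for `k ≥ 1`,
`λ^r_k = (1/(r+2)) ((r+2−k) cos(k θ_r) + (sin(k θ_r)/sin θ_r) cos θ_r)` with
`θ_r = π/(r+2)`. -/
noncomputable def jacksonCoef (r k : ℕ) : ℝ :=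
  if k = 0 then 1
  else (1 / ((r : ℝ) + 2)) *
    (((r : ℝ) + 2 - k) * Real.cos (k * (Real.pi / ((r : ℝ) + 2))) +
      (Real.sin (k * (Real.pi / ((r : ℝ) + 2))) / Real.sin (Real.pi / ((r : ℝ) + 2))) *
        Real.cos (Real.pi / ((r : ℝ) + 2)))

/-- The multi-indices `α ∈ ℕ^n` with `∑_i α_i ≤ d`. -/
def multiIdx (n d : ℕ) : Finset (Fin n → ℕ) :=
  (Fintype.piFinset fun _ : Fin n => Finset.range (d + 1)).filter fun α => ∑ i, α i ≤ d

/-! With `θ = π/(r+2)` and `x = kθ`, the Taylor bounds `cos x ≥ 1 - x²/2`, `sin x ≥ x - x³/6`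
and `sin θ ≤ θ` give `1 - x² ≤ λ^r_k`, while `|sin kθ| ≤ k |sin θ|` gives `λ^r_k ≤ 1`, for all
`k ≤ r + 2`. For the product, the Weierstrass inequality `∏ (1 - aᵢ) ≥ 1 - ∑ aᵢ` reduces the
lower bound to `∑ αᵢ² ≤ (∑ αᵢ)² ≤ d²`. -/

open Real Finset

theorem Finset.one_sub_sum_le_prod_one_sub {ι R : Type*} [CommRing R] [PartialOrder R]
    [IsOrderedRing R] (s : Finset ι) (a : ι → R) (h0 : ∀ i ∈ s, 0 ≤ a i)
    (h1 : ∀ i ∈ s, a i ≤ 1) : 1 - ∑ i ∈ s, a i ≤ ∏ i ∈ s, (1 - a i) := by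
  induction s using Finset.cons_induction with
  | empty => simp
  | cons j s _ ih =>
    simp only [mem_cons, forall_eq_or_imp] at h0 h1
    have hS : 0 ≤ ∑ i ∈ s, a i := sum_nonneg h0.2
    rw [prod_cons, sum_cons]
    calc 1 - (a j + ∑ i ∈ s, a i)
        ≤ (1 - a j) * (1 - ∑ i ∈ s, a i) := by
          rw [show (1 - a j) * (1 - ∑ i ∈ s, a i)
            = 1 - (a j + ∑ i ∈ s, a i) + a j * ∑ i ∈ s, a i by ring]
          exact le_add_of_nonneg_right (mul_nonneg h0.1 hS)
      _ ≤ (1 - a j) * ∏ i ∈ s, (1 - a i) :=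
          mul_le_mul_of_nonneg_left (ih h0.2 h1.2) (sub_nonneg.2 h1.1)

theorem Real.abs_sin_nat_mul_le (n : ℕ) (x : ℝ) : |sin (n * x)| ≤ n * |sin x| := by
  induction n with
  | zero => simp
  | succ n ih =>
    have hcos : |cos (n * x)| ≤ 1 := abs_cos_le_one _
    calc |sin ((n + 1 : ℕ) * x)| = |sin (n * x) * cos x + cos (n * x) * sin x| := by
          push_cast; rw [add_mul, one_mul, sin_add]
      _ ≤ |sin (n * x)| * |cos x| + |cos (n * x)| * |sin x| := by
          rw [← abs_mul, ← abs_mul]; exact abs_add_le _ _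
      _ ≤ n * |sin x| * 1 + 1 * |sin x| := by
          gcongr
          · exact abs_cos_le_one _
      _ = (n + 1 : ℕ) * |sin x| := by push_cast; ring

theorem Real.div_mul_le_sin_mul_cos_div_sin {x θ : ℝ} (hx : 0 ≤ x) (hxπ : x ≤ π)
    (hθ : 0 < θ) (hθπ : θ ≤ π / 2) :
    x / θ * (1 - x ^ 2 / 6 - θ ^ 2 / 2) ≤ sin x * cos θ / sin θ := by
  have hsinθ : 0 < sin θ := sin_pos_of_pos_of_lt_pi hθ (by linarith [pi_pos])
  have hcosθ : 0 ≤ cos θ := cos_nonneg_of_mem_Icc ⟨by linarith, hθπ⟩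
  have hsinx : 0 ≤ sin x := sin_nonneg_of_nonneg_of_le_pi hx hxπ
  rcases le_or_gt (x ^ 2) 6 with hx6 | hx6
  · have hcubic : 0 ≤ x - x ^ 3 / 6 := by nlinarith
    calc x / θ * (1 - x ^ 2 / 6 - θ ^ 2 / 2)
        ≤ (x - x ^ 3 / 6) * (1 - θ ^ 2 / 2) / θ := by
          rw [div_mul_eq_mul_div, div_le_div_iff_of_pos_right hθ]
          nlinarith [sq_nonneg (x * θ)]
      _ ≤ sin x * cos θ / θ := by
          gcongr ?_ / θ
          calc (x - x ^ 3 / 6) * (1 - θ ^ 2 / 2) ≤ (x - x ^ 3 / 6) * cos θ :=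
                mul_le_mul_of_nonneg_left one_sub_sq_div_two_le_cos hcubic
            _ ≤ sin x * cos θ := mul_le_mul_of_nonneg_right (sin_ge_sub_cube hx) hcosθ
      _ ≤ sin x * cos θ / sin θ :=
          div_le_div_of_nonneg_left (by positivity) hsinθ (sin_le hθ.le)
  · calc x / θ * (1 - x ^ 2 / 6 - θ ^ 2 / 2) ≤ 0 :=
          mul_nonpos_of_nonneg_of_nonpos (by positivity) (by nlinarith)
      _ ≤ sin x * cos θ / sin θ := by positivity

theorem jacksonCoef_eq (r k : ℕ) :
    jacksonCoef r k = ((r + 2 - k) * cos (k * (π / (r + 2))) +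
      sin (k * (π / (r + 2))) * cos (π / (r + 2)) / sin (π / (r + 2))) / (r + 2) := by
  rcases eq_or_ne k 0 with rfl | hk
  · simp only [jacksonCoef, if_true, Nat.cast_zero, zero_mul, cos_zero, sin_zero, sub_zero,
      mul_one, zero_div, add_zero]
    field_simp
  · rw [jacksonCoef, if_neg hk]
    ring

theorem jacksonCoef_le_one {r k : ℕ} (hk : (k : ℝ) ≤ r + 2) : jacksonCoef r k ≤ 1 := by
  have hN : (2 : ℝ) ≤ r + 2 := by linarith [r.cast_nonneg (α := ℝ)]
  rw [jacksonCoef_eq, div_le_one (by linarith)]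
  set θ := π / ((r : ℝ) + 2) with hθ
  have hθ0 : 0 < θ := by positivity
  have hθπ : θ < π := div_lt_self pi_pos (by linarith)
  have hsinθ : 0 < sin θ := sin_pos_of_pos_of_lt_pi hθ0 hθπ
  have hkθ : k * θ ≤ π := by
    rw [hθ, mul_div_assoc', div_le_iff₀ (by linarith)]
    exact mul_le_mul_of_nonneg_right hk pi_pos.le |>.trans_eq (mul_comm _ _)
  have hcos_term : (r + 2 - k) * cos (k * θ) ≤ r + 2 - k :=
    mul_le_of_le_one_right (sub_nonneg.2 hk) (cos_le_one _)
  have hsin_term : sin (k * θ) * cos θ / sin θ ≤ k := by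
    rw [div_le_iff₀ hsinθ]
    calc sin (k * θ) * cos θ
        ≤ sin (k * θ) :=
          mul_le_of_le_one_right (sin_nonneg_of_nonneg_of_le_pi (by positivity) hkθ) (cos_le_one _)
      _ ≤ k * |sin θ| := (le_abs_self _).trans (abs_sin_nat_mul_le k θ)
      _ = k * sin θ := by rw [abs_of_pos hsinθ]
  linarith

theorem one_sub_le_jacksonCoef {r k : ℕ} (hk : (k : ℝ) ≤ r + 2) :
    1 - π ^ 2 * k ^ 2 / ((r : ℝ) + 2) ^ 2 ≤ jacksonCoef r k := by
  have hN : (2 : ℝ) ≤ r + 2 := by linarith [r.cast_nonneg (α := ℝ)]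
  rw [jacksonCoef_eq, le_div_iff₀ (by linarith)]
  set N : ℝ := r + 2
  set θ := π / N with hθ
  have hθ0 : 0 < θ := by positivity
  have hθπ : θ ≤ π / 2 := div_le_div_of_nonneg_left pi_pos.le two_pos hN
  have hkθ : k * θ ≤ π := by
    rw [hθ, mul_div_assoc', div_le_iff₀ (by linarith)]
    exact mul_le_mul_of_nonneg_right hk pi_pos.le |>.trans_eq (mul_comm _ _)
  have hsin_term := div_mul_le_sin_mul_cos_div_sin (by positivity) hkθ hθ0 hθπ
  rw [mul_div_cancel_right₀ _ hθ0.ne'] at hsin_term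
  have hcos_term : (N - k) * (1 - (k * θ) ^ 2 / 2) ≤ (N - k) * cos (k * θ) :=
    mul_le_mul_of_nonneg_left one_sub_sq_div_two_le_cos (sub_nonneg.2 hk)
  have hk_sq : (k : ℝ) * θ ^ 2 ≤ (k * θ) ^ 2 := by
    rw [mul_pow]
    gcongr
    exact_mod_cast Nat.le_self_pow two_ne_zero k
  have hsq : π ^ 2 * k ^ 2 / N ^ 2 = (k * θ) ^ 2 := by
    rw [hθ]; field_simp
  rw [hsq]
  linarith [mul_nonneg (sub_nonneg.2 (show (1 : ℝ) ≤ N by linarith)) (sq_nonneg (k * θ)),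
    mul_nonneg k.cast_nonneg (sq_nonneg (k * θ))]

theorem jacksonCoef_pos {r k : ℕ} (hk : π * k < r + 2) : 0 < jacksonCoef r k := by
  have hk' : (k : ℝ) ≤ r + 2 :=
    (le_mul_of_one_le_left k.cast_nonneg (by linarith [pi_gt_three])).trans hk.le
  have hlt : π ^ 2 * k ^ 2 / ((r : ℝ) + 2) ^ 2 < 1 := by
    rw [div_lt_one (by positivity), ← mul_pow]
    exact pow_lt_pow_left₀ hk (by positivity) two_ne_zero
  linarith [one_sub_le_jacksonCoef hk']

/-- If `π d < r + 2` then, for every `α ∈ ℕ^n_d`, the product Jackson coefficient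
`λ^r_α = ∏_i λ^r_{α_i}` satisfies `1 − π²d²/(r+2)² ≤ λ^r_α ≤ 1`, and in particular
`|1 − λ^r_α| ≤ π²d²/(r+2)²`. -/
theorem jackson_product_coef_bound (r d n : ℕ)
    (h : Real.pi * d < (r : ℝ) + 2) (α : Fin n → ℕ) (hα : α ∈ multiIdx n d) :
    (1 - Real.pi ^ 2 * d ^ 2 / ((r : ℝ) + 2) ^ 2 ≤ ∏ i, jacksonCoef r (α i) ∧
      ∏ i, jacksonCoef r (α i) ≤ 1) ∧
    |1 - ∏ i, jacksonCoef r (α i)| ≤ Real.pi ^ 2 * d ^ 2 / ((r : ℝ) + 2) ^ 2 := by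
  have hsum : ∑ i, α i ≤ d := (mem_filter.1 hα).2
  have hd : ∀ i, (α i : ℝ) ≤ d := fun i => by
    exact_mod_cast (single_le_sum (fun j _ => (α j).zero_le) (mem_univ i)).trans hsum
  have hk : ∀ i, (α i : ℝ) ≤ r + 2 := fun i =>
    (hd i).trans ((le_mul_of_one_le_left d.cast_nonneg (by linarith [pi_gt_three])).trans h.le)
  have hpos : ∀ i, 0 ≤ jacksonCoef r (α i) := fun i =>
    (jacksonCoef_pos ((mul_le_mul_of_nonneg_left (hd i) pi_pos.le).trans_lt h)).le
  have hup : ∀ i, jacksonCoef r (α i) ≤ 1 := fun i => jacksonCoef_le_one (hk i)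
  have hsq : ∑ i, (α i : ℝ) ^ 2 ≤ (d : ℝ) ^ 2 :=
    (sum_sq_le_sq_sum_of_nonneg fun i _ => (α i).cast_nonneg).trans
      (by exact_mod_cast Nat.pow_le_pow_left hsum 2)
  have hlow : 1 - π ^ 2 * d ^ 2 / ((r : ℝ) + 2) ^ 2 ≤ ∏ i, jacksonCoef r (α i) :=
    calc 1 - π ^ 2 * d ^ 2 / ((r : ℝ) + 2) ^ 2
        ≤ 1 - ∑ i, π ^ 2 * (α i : ℝ) ^ 2 / ((r : ℝ) + 2) ^ 2 := by
          rw [← sum_div, ← mul_sum]; gcongr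
      _ ≤ 1 - ∑ i, (1 - jacksonCoef r (α i)) := by
          gcongr with i; linarith [one_sub_le_jacksonCoef (hk i)]
      _ ≤ ∏ i, (1 - (1 - jacksonCoef r (α i))) :=
          one_sub_sum_le_prod_one_sub _ _ (fun i _ => sub_nonneg.2 (hup i))
            (fun i _ => sub_le_self _ (hpos i))
      _ = ∏ i, jacksonCoef r (α i) := by simp only [sub_sub_cancel]
  have hbound_nonneg : 0 ≤ π ^ 2 * d ^ 2 / ((r : ℝ) + 2) ^ 2 := by positivity
  have hprod_le : ∏ i, jacksonCoef r (α i) ≤ 1 := prod_le_one (fun i _ => hpos i) (fun i _ => hup i)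
  exact ⟨⟨hlow, hprod_le⟩, abs_sub_le_iff.2 ⟨by linarith, by linarith⟩⟩
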